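/- Suppose a tensor R is reparametrized as R = a·r with trainable parameter r initialized with per-entry standard deviation b, and trained by a sign-based/normalized (Adam-like) optimizer with learning rate c. Then for any ψ > 0, the parametrizations (a, b, c) and (a/ψ, b·ψ, c·ψ) produce identical trajectories of R: at every iteration t, R_t^{(a,b,c)} = R_t^{(a/ψ, bψ, cψ)}. -/
import Mathlib


/-- Trajectory of the trainable parameter `r` under an abstract Adam-like
optimizer: `r₀ = b • z` and `r_{t+1} = r_t − c • g_t(R_t)` where the update
`g_t` depends only on the reparametrized value `R_t = a • r_t`. -/
def trajectory {ι : Type*} (G : ℕ → (ι → ℝ) → (ι → ℝ)) (z : ι → ℝ)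
    (a b c : ℝ) : ℕ → (ι → ℝ)
  | 0 => b • z
  | t + 1 => trajectory G z a b c t - c • G t (a • trajectory G z a b c t)

/-- Scale invariance of abc-parametrizations under Adam-like optimizers: the
parametrizations `(a, b, c)` and `(a/ψ, bψ, cψ)` produce identical trajectories
of `R = a • r`. -/
theorem abc_parametrization_scale_invariance
    {ι : Type*} (G : ℕ → (ι → ℝ) → (ι → ℝ)) (z : ι → ℝ)
    (a b c ψ : ℝ) (hψ : 0 < ψ) (t : ℕ) :
    a • trajectory G z a b c t =
      (a / ψ) • trajectory G z (a / ψ) (b * ψ) (c * ψ) t := by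
  have hψ0 : ψ ≠ 0 := hψ.ne'
  have key : ∀ t, trajectory G z (a / ψ) (b * ψ) (c * ψ) t = ψ • trajectory G z a b c t := by
    intro t
    induction t with
    | zero => rw [trajectory, trajectory, mul_smul, smul_comm]
    | succ n ih =>
      rw [trajectory, trajectory, ih, smul_smul, div_mul_cancel₀ a hψ0,
        smul_sub, mul_comm c ψ, mul_smul]
  rw [key, smul_smul, div_mul_cancel₀ a hψ0]
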